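/- arXiv:0904.3827 — 2 statements merged into one kernel-verified Lean document; each statement's English description precedes it below -/
import Mathlib

section
/- (Galois's theorem) For β ∈ K, β lies in the image of k in K (i.e. β ∈ k) if and only if Φ(g)(β) = β for every g ∈ G. -/
/-! The coefficients of `f` lie in `k`, so `f` comes from a separable polynomial over `k` whose
splitting field is `K`; hence `K/k` is Galois and the elements of `K` fixed by every
`k`-automorphism are exactly those of `k`. A `k`-automorphism `τ` permutes the roots,
`τ (α i) = α (σ i)`, and then `σ` carries `α`-relations to `α`-relations (and only those, as `τ`
is injective), so `σ ∈ G` and `τ = Φ σ`. Thus `Φ` maps `G` onto `Aut_k(K)`. -/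

open MvPolynomial Polynomial

variable (k : Type*) {K : Type*} [Field k] [Field K] [Algebra k K] {n : ℕ}

/-- The ideal of `α`-relations. -/
noncomputable def relIdeal (α : Fin n → K) : Ideal (MvPolynomial (Fin n) k) :=
  RingHom.ker (MvPolynomial.aeval α : MvPolynomial (Fin n) k →ₐ[k] K)

/-- The Galois group of `α` over `k`: permutations stabilizing the ideal of relations. -/
def galoisGroup (α : Fin n → K) : Subgroup (Equiv.Perm (Fin n)) where
  carrier := {σ | MvPolynomial.rename ⇑σ '' (relIdeal k α : Set (MvPolynomial (Fin n) k))
      = (relIdeal k α : Set (MvPolynomial (Fin n) k))}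
  one_mem' := by
    have h : ∀ p : MvPolynomial (Fin n) k, rename ⇑(1 : Equiv.Perm (Fin n)) p = p := by
      intro p; simp [Equiv.Perm.coe_one, rename_id]
    simp only [Set.mem_setOf_eq]
    rw [Set.image_congr' h]
    exact Set.image_id _
  mul_mem' := by
    intro σ τ hσ hτ
    simp only [Set.mem_setOf_eq] at *
    have h : ∀ p : MvPolynomial (Fin n) k,
        rename ⇑(σ * τ) p = rename ⇑σ (rename ⇑τ p) := by
      intro p; rw [rename_rename]; rfl
    rw [Set.image_congr' h]
    calc (fun p => rename ⇑σ (rename ⇑τ p)) '' (relIdeal k α : Set (MvPolynomial (Fin n) k))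
        = rename ⇑σ '' (rename ⇑τ '' (relIdeal k α : Set (MvPolynomial (Fin n) k))) :=
          (Set.image_comp _ _ _)
      _ = _ := by rw [hτ, hσ]
  inv_mem' := by
    intro σ hσ
    simp only [Set.mem_setOf_eq] at *
    conv_lhs => rw [← hσ]
    rw [← Set.image_comp]
    have h : ∀ p : MvPolynomial (Fin n) k,
        (rename ⇑σ⁻¹ ∘ rename ⇑σ) p = p := by
      intro p
      simp only [Function.comp_apply, rename_rename]
      have : (⇑σ⁻¹ ∘ ⇑σ) = id := by
        funext i; simp
      rw [this, rename_id]; rfl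
    rw [Set.image_congr' h]
    exact Set.image_id _

theorem Set.MapsTo.exists_perm_apply_eq {ι X : Type*} [Finite ι] {α : ι → X}
    (hα : Function.Injective α) {f : X → X} (hf : Function.Injective f)
    (h : (Set.range α).MapsTo f (Set.range α)) : ∃ σ : Equiv.Perm ι, ∀ i, f (α i) = α (σ i) := by
  choose s hs using fun i => h ⟨i, rfl⟩
  have hsinj : Function.Injective s := fun i j hij => hα <| hf <| by rw [← hs, ← hs, hij]
  exact ⟨Equiv.ofBijective s (Finite.injective_iff_bijective.1 hsinj), fun i => (hs i).symm⟩

theorem MvPolynomial.aeval_rename_of_apply_eq {R A ι : Type*} [CommSemiring R] [CommSemiring A]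
    [Algebra R A] {α : ι → A} (τ : A →ₐ[R] A) {σ : ι → ι} (h : ∀ i, τ (α i) = α (σ i))
    (p : MvPolynomial ι R) : aeval α (rename σ p) = τ (aeval α p) := by
  rw [aeval_rename, comp_aeval_apply]
  congr
  funext i
  exact (h i).symm

section

variable {k}

theorem exists_map_eq_prod_X_sub_C (α : Fin n → K)
    (hcoeff : ∀ m : ℕ, (∏ i : Fin n, (Polynomial.X - Polynomial.C (α i)) : K[X]).coeff m ∈
      (algebraMap k K).range) :
    ∃ g : k[X], g.map (algebraMap k K) = ∏ i : Fin n, (Polynomial.X - Polynomial.C (α i)) :=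
  (lifts_iff_coeff_lifts _).2 hcoeff

variable {α : Fin n → K} {g : k[X]}

theorem rootSet_eq_range_of_map_eq_prod
    (hg : g.map (algebraMap k K) = ∏ i : Fin n, (Polynomial.X - Polynomial.C (α i))) :
    g.rootSet K = Set.range α := by
  have hg0 : g ≠ 0 := by
    rintro rfl
    exact (monic_prod_of_monic _ _ fun i _ => monic_X_sub_C (α i)).ne_zero
      (by rw [← hg, Polynomial.map_zero])
  ext x
  simp [mem_rootSet, hg0, Polynomial.aeval_def, Polynomial.eval₂_eq_eval_map, hg,
    Polynomial.eval_prod, Finset.prod_eq_zero_iff, sub_eq_zero, eq_comm (a := x)]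

theorem isSplittingField_of_map_eq_prod
    (hg : g.map (algebraMap k K) = ∏ i : Fin n, (Polynomial.X - Polynomial.C (α i)))
    (hgen : Algebra.adjoin k (Set.range α) = ⊤) : g.IsSplittingField k K where
  splits' := hg ▸ Splits.prod fun i _ => Splits.X_sub_C _
  adjoin_rootSet' := by rw [rootSet_eq_range_of_map_eq_prod hg, hgen]

theorem separable_of_map_eq_prod
    (hg : g.map (algebraMap k K) = ∏ i : Fin n, (Polynomial.X - Polynomial.C (α i)))
    (hinj : Function.Injective α) : g.Separable := by
  rw [← separable_map (algebraMap k K), hg]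
  exact separable_prod_X_sub_C_iff.2 hinj

theorem exists_perm_apply_eq_of_map_eq_prod
    (hg : g.map (algebraMap k K) = ∏ i : Fin n, (Polynomial.X - Polynomial.C (α i)))
    (hinj : Function.Injective α) (τ : K →ₐ[k] K) :
    ∃ σ : Equiv.Perm (Fin n), ∀ i, τ (α i) = α (σ i) := by
  have hτ := rootSet_mapsTo (p := g) τ
  rw [rootSet_eq_range_of_map_eq_prod hg] at hτ
  exact hτ.exists_perm_apply_eq hinj τ.injective

theorem mem_galoisGroup_of_apply_eq (τ : K →ₐ[k] K) {σ : Equiv.Perm (Fin n)}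
    (h : ∀ i, τ (α i) = α (σ i)) : σ ∈ galoisGroup k α := by
  have hrename : ∀ p, rename σ p ∈ relIdeal k α ↔ p ∈ relIdeal k α := fun p => by
    rw [relIdeal, RingHom.mem_ker, RingHom.mem_ker,
      aeval_rename_of_apply_eq τ h, map_eq_zero]
  ext q
  refine ⟨?_, fun hq => ⟨rename ⇑σ⁻¹ q, (hrename _).1 ?_, ?_⟩⟩
  · rintro ⟨p, hp, rfl⟩
    exact (hrename p).2 hp
  · simpa [rename_rename] using hq
  · simp [rename_rename]

end

/-- Galois's theorem: `β ∈ k` iff `β` is fixed by every element of `G`. -/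
theorem mem_range_algebraMap_iff_fixed (α : Fin n → K) (hinj : Function.Injective α)
    (hcoeff : ∀ m : ℕ, (∏ i : Fin n, (Polynomial.X - Polynomial.C (α i)) : K[X]).coeff m ∈
      (algebraMap k K).range)
    (hgen : Algebra.adjoin k (Set.range α) = ⊤)
    (Φ : Equiv.Perm (Fin n) → (K ≃ₐ[k] K))
    (hΦ : ∀ σ ∈ galoisGroup k α, ∀ i : Fin n, Φ σ (α i) = α (σ i))
    (β : K) :
    β ∈ (algebraMap k K).range ↔ ∀ g ∈ galoisGroup k α, Φ g β = β := by
  obtain ⟨g, hg⟩ := exists_map_eq_prod_X_sub_C α hcoeff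
  have := isSplittingField_of_map_eq_prod hg hgen
  have : FiniteDimensional k K := IsSplittingField.finiteDimensional K g
  have : IsGalois k K := IsGalois.of_separable_splitting_field (separable_of_map_eq_prod hg hinj)
  refine ⟨fun ⟨c, hc⟩ σ _ => hc ▸ (Φ σ).commutes c, fun hfix => ?_⟩
  refine (IsGalois.mem_range_algebraMap_iff_fixed β).2 fun τ => ?_
  obtain ⟨σ, hσ⟩ := exists_perm_apply_eq_of_map_eq_prod hg hinj τ
  have hσG := mem_galoisGroup_of_apply_eq (τ : K →ₐ[k] K) hσ
  have hΦσ : Φ σ = τ := AlgEquiv.coe_toAlgHom_injective <| AlgHom.ext_of_adjoin_eq_top hgen <| by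
    rintro _ ⟨i, rfl⟩
    simp [hΦ σ hσG, hσ]
  rw [← hΦσ]
  exact hfix σ hσG
end

section
/- Let σ ∈ L, β = β_{σH}, let O ⊆ L/H be the orbit of the coset σH under left multiplication by G, and c = |O|. If the restriction to O of the map C ↦ β_C is injective, then β is algebraic over k, the image in K[X] of its minimal polynomial over k equals ∏_{C ∈ O} (X − β_C), and the degree of this minimal polynomial is c. -/
open MvPolynomial Polynomial

variable (k : Type*) {K : Type*} [Field k] [Field K] [Algebra k K] {n : ℕ}

/-!
`K` is the splitting field of the separable polynomial `∏ (X - α_i)`, which has coefficients in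
`k`, so `K/k` is Galois and the roots of the minimal polynomial of `β` are its conjugates `φ β`.
Each `φ ∈ Gal(K/k)` permutes the `α_i`, i.e. acts on `α`-evaluations as some `g ∈ G`; so every
conjugate is a value `β_{gσH}` on the orbit. Conversely, `G` preserves the ideal of relations,
so every `k`-polynomial vanishing at `β` vanishes at each `β_{gσH}`. The roots of the minimal
polynomial are thus exactly the values on the orbit, each simple by separability.
-/

theorem exists_perm_comp_eq_of_mapsTo {ι X : Type*} [Finite ι] {α : ι → X}
    (hα : Function.Injective α) {f : X → X} (hf : Function.Injective f)
    (hmaps : ∀ i, f (α i) ∈ Set.range α) : ∃ g : Equiv.Perm ι, α ∘ g = f ∘ α := by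
  choose u hu using hmaps
  have hu_inj : Function.Injective u := fun i j h => hα (hf (by rw [← hu, ← hu, h]))
  exact ⟨Equiv.ofBijective u (Finite.injective_iff_bijective.1 hu_inj), funext hu⟩

section

variable {k}

theorem aeval_rename_of_comp_eq {ι : Type*} {α : ι → K} {g : ι → ι} {φ : K →ₐ[k] K}
    (h : α ∘ g = φ ∘ α) (Q : MvPolynomial ι k) :
    aeval α (rename g Q) = φ (aeval α Q) := by
  rw [aeval_rename, h, comp_aeval_apply]
  rfl

theorem mem_galoisGroup_iff {α : Fin n → K} {g : Equiv.Perm (Fin n)} :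
    g ∈ galoisGroup k α ↔ ∀ Q, rename g Q ∈ relIdeal k α ↔ Q ∈ relIdeal k α := by
  change rename g '' _ = _ ↔ _
  constructor
  · intro h Q
    rw [← SetLike.mem_coe, ← SetLike.mem_coe]
    nth_rw 1 [← h]
    exact (rename_injective _ g.injective).mem_set_image
  · intro h
    ext Q
    refine ⟨by rintro ⟨Q', hQ', rfl⟩; exact (h Q').2 hQ', fun hQ => ?_⟩
    exact ⟨(renameEquiv k g).symm Q, (h _).1 (by simpa using hQ), by simp⟩

theorem mem_galoisGroup_of_comp_eq {α : Fin n → K} {g : Equiv.Perm (Fin n)} (φ : K ≃ₐ[k] K)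
    (h : α ∘ g = φ ∘ α) : g ∈ galoisGroup k α :=
  mem_galoisGroup_iff.2 fun Q => by
    simp only [relIdeal, RingHom.mem_ker, aeval_rename_of_comp_eq (φ := (φ : K →ₐ[k] K)) h]
    exact map_eq_zero_iff _ φ.injective

theorem aeval_aeval_rename_eq_zero {α : Fin n → K} {g : Equiv.Perm (Fin n)}
    (hg : g ∈ galoisGroup k α) {R : MvPolynomial (Fin n) k} {q : k[X]}
    (hq : Polynomial.aeval (aeval α R) q = 0) :
    Polynomial.aeval (aeval α (rename g R)) q = 0 := by
  have hmem : Polynomial.aeval R q ∈ relIdeal k α := by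
    rwa [relIdeal, RingHom.mem_ker, ← Polynomial.aeval_algHom_apply]
  have := (mem_galoisGroup_iff.1 hg _).2 hmem
  rwa [relIdeal, RingHom.mem_ker, ← Polynomial.aeval_algHom_apply,
    ← Polynomial.aeval_algHom_apply] at this

theorem rootSet_minpoly_aeval [Normal k K] {α : Fin n → K} (hα : Function.Injective α)
    (hmaps : ∀ (φ : K ≃ₐ[k] K) i, φ (α i) ∈ Set.range α) (R : MvPolynomial (Fin n) k) :
    (minpoly k (aeval α R)).rootSet K =
      Set.range fun g : galoisGroup k α => aeval α (rename (g : Equiv.Perm (Fin n)) R) := by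
  ext y
  rw [mem_rootSet_of_ne (minpoly.ne_zero (Algebra.IsIntegral.isIntegral _))]
  constructor
  · intro hy
    obtain ⟨φ, rfl⟩ := minpoly.exists_algEquiv_of_root' (Algebra.IsAlgebraic.isAlgebraic _) hy
    obtain ⟨g, hg⟩ := exists_perm_comp_eq_of_mapsTo hα φ.injective (hmaps φ)
    exact ⟨⟨g, mem_galoisGroup_of_comp_eq φ hg⟩, aeval_rename_of_comp_eq (φ := φ.toAlgHom) hg R⟩
  · rintro ⟨⟨g, hg⟩, rfl⟩
    exact aeval_aeval_rename_eq_zero hg (minpoly.aeval k _)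

theorem map_minpoly_eq_prod_rootSet [Normal k K] [Algebra.IsSeparable k K] (x : K) :
    (minpoly k x).map (algebraMap k K) =
      ∏ y ∈ ((minpoly k x).rootSet K).toFinset, (Polynomial.X - Polynomial.C y) := by
  classical
  have hsplit : ((minpoly k x).map (algebraMap k K)).Splits := Normal.splits' x
  simp_rw [rootSet_def, Finset.toFinset_coe]
  rw [Finset.prod_eq_multiset_prod, Multiset.toFinset_val,
    Multiset.dedup_eq_self.2 (nodup_roots (Separable.map (Algebra.IsSeparable.isSeparable k x))),
    ← hsplit.eq_prod_roots_of_monic ((minpoly.monic (Algebra.IsIntegral.isIntegral x)).map _)]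

theorem map_minpoly_eq_prod_of_injOn [Normal k K] [Algebra.IsSeparable k K] {x : K}
    {ι : Type*} {s : Finset ι} {f : ι → K} (hf : Set.InjOn f s)
    (himage : f '' s = (minpoly k x).rootSet K) :
    (minpoly k x).map (algebraMap k K) = ∏ i ∈ s, (Polynomial.X - Polynomial.C (f i)) := by
  classical
  have hs : ((minpoly k x).rootSet K).toFinset = s.image f := by
    ext
    simp [← himage]
  rw [map_minpoly_eq_prod_rootSet, hs, Finset.prod_image hf]

theorem rootSet_eq_range_of_map_eq_prod_s13 {ι : Type*} [Fintype ι] {α : ι → K} {f₀ : k[X]}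
    (hf₀ : f₀.map (algebraMap k K) = ∏ i, (Polynomial.X - Polynomial.C (α i))) :
    f₀.rootSet K = Set.range α := by
  ext x
  rw [mem_rootSet', Polynomial.aeval_def, ← Polynomial.eval_map, hf₀, Polynomial.eval_prod,
    Finset.prod_eq_zero_iff,
    and_iff_right (monic_prod_of_monic _ _ fun i _ => monic_X_sub_C (α i)).ne_zero]
  simp [sub_eq_zero, eq_comm]

theorem algEquiv_apply_mem_range_of_map_eq_prod {ι : Type*} [Fintype ι] {α : ι → K}
    {f₀ : k[X]} (hf₀ : f₀.map (algebraMap k K) = ∏ i, (Polynomial.X - Polynomial.C (α i)))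
    (φ : K ≃ₐ[k] K) (i : ι) : φ (α i) ∈ Set.range α := by
  have h := rootSet_eq_range_of_map_eq_prod_s13 hf₀
  rw [← h]
  exact rootSet_mapsTo (φ : K →ₐ[k] K) (h ▸ Set.mem_range_self i)

theorem isGalois_of_map_eq_prod {ι : Type*} [Fintype ι] {α : ι → K} (hα : Function.Injective α)
    {f₀ : k[X]} (hf₀ : f₀.map (algebraMap k K) = ∏ i, (Polynomial.X - Polynomial.C (α i)))
    (hgen : Algebra.adjoin k (Set.range α) = ⊤) : IsGalois k K := by
  have : IsSplittingField k K f₀ :=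
    ⟨hf₀ ▸ Splits.prod fun i _ => Splits.X_sub_C _,
      by rw [rootSet_eq_range_of_map_eq_prod_s13 hf₀, hgen]⟩
  refine IsGalois.of_separable_splitting_field (p := f₀) ?_
  rw [← separable_map (algebraMap k K), hf₀]
  exact separable_prod_X_sub_C_iff.2 hα

end

theorem minpoly_root_resolvent_eq_prod_orbit
    (α : Fin n → K) (hinj : Function.Injective α)
    (hcoeff : ∀ m : ℕ, (∏ i : Fin n, (Polynomial.X - Polynomial.C (α i)) : K[X]).coeff m ∈
      (algebraMap k K).range)
    (hgen : Algebra.adjoin k (Set.range α) = ⊤)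
    (H L : Subgroup (Equiv.Perm (Fin n))) (hGL : galoisGroup k α ≤ L)
    (P : MvPolynomial (Fin n) k)
    (β : (↥L ⧸ H.subgroupOf L) → K)
    (hβ : ∀ σ : ↥L, β (QuotientGroup.mk σ) =
      MvPolynomial.aeval α (rename ⇑(σ : Equiv.Perm (Fin n)) P))
    (σ : Equiv.Perm (Fin n)) (hσ : σ ∈ L)
    (O : Set (↥L ⧸ H.subgroupOf L))
    (hO : O = {C | ∃ (g : Equiv.Perm (Fin n)) (hg : g ∈ galoisGroup k α),
      (⟨g, hGL hg⟩ : ↥L) • (QuotientGroup.mk (⟨σ, hσ⟩ : ↥L) : ↥L ⧸ H.subgroupOf L) = C})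
    (hinjO : Set.InjOn β O) :
    IsAlgebraic k (β (QuotientGroup.mk (⟨σ, hσ⟩ : ↥L))) ∧
    ((minpoly k (β (QuotientGroup.mk (⟨σ, hσ⟩ : ↥L)))).map (algebraMap k K) =
      ∏ C ∈ (Set.toFinite O).toFinset, (Polynomial.X - Polynomial.C (β C))) ∧
    (minpoly k (β (QuotientGroup.mk (⟨σ, hσ⟩ : ↥L)))).natDegree = Nat.card O := by
  obtain ⟨f₀, hf₀⟩ := (mem_lifts _).1 ((lifts_iff_coeff_lifts _).2 hcoeff)
  have := isGalois_of_map_eq_prod hinj hf₀ hgen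
  have hβ_smul (g : Equiv.Perm (Fin n)) (hg : g ∈ galoisGroup k α) :
      β ((⟨g, hGL hg⟩ : L) • QuotientGroup.mk ⟨σ, hσ⟩) = aeval α (rename g (rename σ P)) := by
    rw [rename_rename]
    exact hβ (⟨g, hGL hg⟩ * ⟨σ, hσ⟩)
  have hβO : β '' O = (minpoly k (β (QuotientGroup.mk ⟨σ, hσ⟩))).rootSet K := by
    rw [hβ, rootSet_minpoly_aeval hinj (algEquiv_apply_mem_range_of_map_eq_prod hf₀), hO]
    ext y
    constructor
    · rintro ⟨_, ⟨g, hg, rfl⟩, rfl⟩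
      exact ⟨⟨g, hg⟩, (hβ_smul g hg).symm⟩
    · rintro ⟨⟨g, hg⟩, rfl⟩
      exact ⟨_, ⟨g, hg, rfl⟩, hβ_smul g hg⟩
  have hprod := map_minpoly_eq_prod_of_injOn (s := (Set.toFinite O).toFinset)
    (by simpa using hinjO) (by simpa using hβO)
  refine ⟨Algebra.IsAlgebraic.isAlgebraic _, hprod, ?_⟩
  rw [← natDegree_map (algebraMap k K), hprod, natDegree_finsetProd_X_sub_C_eq_card,
    Nat.card_eq_card_finite_toFinset]
end
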